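/- arXiv:1307.7252 — 2 statements merged into one kernel-verified Lean document; each statement's English description precedes it below -/
import Mathlib

section
/- Let d₁ ≠ d₂ be square-free positive integers, and for i = 1,2 let ω_i be pure quaternions with ω_i² = d_i, and a_i, b_i positive integers. Write (a_i + b_iω_i)^{m_i} = l_i + r_i ω_i. If l₁ + r₁ω₁ = l₂ + r₂ω₂ as quaternions (equal scalar parts and r₁ω₁ = r₂ω₂ as pure quaternions), then m₁ = m₂ = 0. -/
/-!
Squaring the pure parts of `l₁ + r₁ω₁ = l₂ + r₂ω₂` gives `r₁²d₁ = r₂²d₂`, and comparing the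
parity of prime exponents shows that two distinct square-free integers are not in the same square
class, so `r₁ = r₂ = 0`. On the other hand `a + bω` generates a copy of `ℤ[√d]` inside the
quaternion algebra, and for `a, b, d > 0` every positive power of `a + b√d` has positive
`√d`-coefficient; hence `(a + bω)^m` is a scalar only for `m = 0`.
-/

open scoped Quaternion

theorem Nat.eq_of_sq_mul_eq_sq_mul_of_squarefree {x y d₁ d₂ : ℕ} (hx : x ≠ 0) (hy : y ≠ 0)
    (hd₁ : Squarefree d₁) (hd₂ : Squarefree d₂) (h : x ^ 2 * d₁ = y ^ 2 * d₂) : d₁ = d₂ := by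
  refine Nat.eq_of_factorization_eq hd₁.ne_zero hd₂.ne_zero fun p => ?_
  have hp := congrArg (·.factorization p) h
  simp only [Nat.factorization_mul (pow_ne_zero 2 hx) hd₁.ne_zero,
    Nat.factorization_mul (pow_ne_zero 2 hy) hd₂.ne_zero, Nat.factorization_pow,
    Finsupp.add_apply, Finsupp.smul_apply, smul_eq_mul] at hp
  have := hd₁.natFactorization_le_one p
  have := hd₂.natFactorization_le_one p
  omega

theorem Int.eq_zero_of_mul_self_mul_eq_of_squarefree {r₁ r₂ d₁ d₂ : ℤ}
    (hd₁ : Squarefree d₁) (hd₂ : Squarefree d₂) (hne : d₁ ≠ d₂)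
    (h : r₁ * r₁ * d₁ = r₂ * r₂ * d₂) : r₁ = 0 ∧ r₂ = 0 := by
  have hd₁₀ : d₁ ≠ 0 := hd₁.ne_zero
  have hd₂₀ : d₂ ≠ 0 := hd₂.ne_zero
  suffices hr₁ : r₁ = 0 by
    subst hr₁
    simpa [hd₂₀, eq_comm] using h
  by_contra hr₁
  have hr₂ : r₂ ≠ 0 := by rintro rfl; simp_all
  have habs : d₁.natAbs = d₂.natAbs := by
    refine Nat.eq_of_sq_mul_eq_sq_mul_of_squarefree (Int.natAbs_ne_zero.2 hr₁)
      (Int.natAbs_ne_zero.2 hr₂) (Int.squarefree_natAbs.2 hd₁) (Int.squarefree_natAbs.2 hd₂) ?_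
    simpa [Int.natAbs_mul, sq, mul_assoc] using congrArg Int.natAbs h
  rcases Int.natAbs_eq_natAbs_iff.1 habs with h' | h'
  · exact hne h'
  · subst h'
    have hsum : r₁ * r₁ + r₂ * r₂ = 0 :=
      (mul_eq_zero.1 (by linarith : (r₁ * r₁ + r₂ * r₂) * d₂ = 0)).resolve_right hd₂₀
    nlinarith [mul_self_pos.2 hr₁, mul_self_nonneg r₂]

namespace Zsqrtd

open scoped IsMulCommutative in
def liftOfMulSelf {A : Type*} [Ring A] {d : ℤ} (ω : A) (hω : ω * ω = d) : ℤ√d →+* A :=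
  have := Subring.isMulCommutative_closure (s := {ω}) (by simp)
  (Subring.closure {ω}).subtype.comp
    (lift ⟨⟨ω, Subring.subset_closure rfl⟩, Subtype.ext (by simpa using hω)⟩)

theorem liftOfMulSelf_apply {A : Type*} [Ring A] {d : ℤ} (ω : A) (hω : ω * ω = d) (z : ℤ√d) :
    liftOfMulSelf ω hω z = z.re + z.im * ω := rfl

theorem im_pow_pos {d : ℤ} (hd : 0 ≤ d) {z : ℤ√d} (hre : 0 < z.re) (him : 0 < z.im) {m : ℕ}
    (hm : m ≠ 0) : 0 < (z ^ m).im := by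
  obtain ⟨n, rfl⟩ := Nat.exists_eq_succ_of_ne_zero hm
  suffices ∀ n : ℕ, 0 < (z ^ (n + 1)).re ∧ 0 < (z ^ (n + 1)).im from (this n).2
  intro n
  induction n with
  | zero => simpa using ⟨hre, him⟩
  | succ n ih =>
    rw [pow_succ, re_mul, im_mul]
    obtain ⟨h₁, h₂⟩ := ih
    constructor <;> positivity

end Zsqrtd

theorem mul_self_mul_eq_of_intCast_mul_eq {A : Type*} [Ring A] [CharZero A] {ω₁ ω₂ : A}
    {d₁ d₂ r₁ r₂ : ℤ} (hω₁ : ω₁ * ω₁ = d₁) (hω₂ : ω₂ * ω₂ = d₂) (h : (r₁ : A) * ω₁ = r₂ * ω₂) :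
    r₁ * r₁ * d₁ = r₂ * r₂ * d₂ := by
  have key : ∀ (ω : A) (d r : ℤ), ω * ω = d → (r : A) * ω * (r * ω) = ((r * r * d : ℤ) : A) := by
    intro ω d r hω
    rw [mul_assoc, ← mul_assoc ω, ← (Int.cast_commute r ω).eq, mul_assoc, hω]
    push_cast
    rw [mul_assoc]
  exact_mod_cast (key ω₁ d₁ r₁ hω₁).symm.trans (h ▸ key ω₂ d₂ r₂ hω₂)

namespace QuaternionAlgebra
variable {R : Type*} [CommRing R] {c₁ c₂ c₃ : R}

instance [CharZero R] : CharZero ℍ[R,c₁,c₂,c₃] :=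
  charZero_of_injective_algebraMap coe_injective

theorem re_intCast_add_intCast_mul {ω : ℍ[R,c₁,c₂,c₃]} (hω : ω.re = 0) (l r : ℤ) :
    ((l : ℍ[R,c₁,c₂,c₃]) + r * ω).re = l := by
  simp [← coe_intCast, coe_mul_eq_smul, hω]

theorem intCast_add_intCast_mul_eq [CharZero R] {ω₁ ω₂ : ℍ[R,c₁,c₂,c₃]} (hω₁ : ω₁.re = 0)
    (hω₂ : ω₂.re = 0) {l₁ l₂ r₁ r₂ : ℤ}
    (h : (l₁ : ℍ[R,c₁,c₂,c₃]) + r₁ * ω₁ = l₂ + r₂ * ω₂) :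
    l₁ = l₂ ∧ (r₁ : ℍ[R,c₁,c₂,c₃]) * ω₁ = r₂ * ω₂ := by
  have hl : l₁ = l₂ := by
    exact_mod_cast (re_intCast_add_intCast_mul hω₁ l₁ r₁).symm.trans
      ((congrArg re h).trans (re_intCast_add_intCast_mul hω₂ l₂ r₂))
  exact ⟨hl, add_left_cancel (hl ▸ h)⟩

theorem intCast_add_intCast_mul_pow_ne_intCast [CharZero R] {ω : ℍ[R,c₁,c₂,c₃]} {d a b : ℤ}
    (hre : ω.re = 0) (hω : ω * ω = d) (hd : 0 < d) (ha : 0 < a) (hb : 0 < b) {m : ℕ}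
    (hm : m ≠ 0) (l : ℤ) :
    ((a : ℍ[R,c₁,c₂,c₃]) + b * ω) ^ m ≠ l := by
  intro h
  set z : ℤ√d := ⟨a, b⟩ ^ m
  have hz : ((a : ℍ[R,c₁,c₂,c₃]) + b * ω) ^ m = z.re + z.im * ω := by
    rw [← Zsqrtd.liftOfMulSelf_apply ω hω, map_pow]; rfl
  have hscalar : (z.re : ℍ[R,c₁,c₂,c₃]) + z.im * ω = l + (0 : ℤ) * ω := by simp [← hz, h]
  have hsq := mul_self_mul_eq_of_intCast_mul_eq hω hω (intCast_add_intCast_mul_eq hre hre hscalar).2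
  have him : z.im = 0 := by simpa [hd.ne'] using hsq
  exact (Zsqrtd.im_pow_pos hd.le ha hb hm).ne' him

end QuaternionAlgebra

/-- let `d₁ ≠ d₂` be square-free positive integers, `ω₁, ω₂` pure
quaternions with `ωᵢ² = dᵢ`, and `aᵢ, bᵢ` positive integers.  Writing
`(aᵢ + bᵢωᵢ)^{mᵢ} = lᵢ + rᵢωᵢ`, if `l₁ + r₁ω₁ = l₂ + r₂ω₂` as quaternions,
then `m₁ = m₂ = 0`. -/
theorem families_no_overlap
    (c₁ c₂ : ℚ) (d₁ d₂ : ℤ) (hd₁ : 0 < d₁) (hd₂ : 0 < d₂)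
    (hsf₁ : Squarefree d₁) (hsf₂ : Squarefree d₂) (hne : d₁ ≠ d₂)
    (ω₁ ω₂ : QuaternionAlgebra ℚ c₁ 0 c₂)
    (hp₁ : ω₁.re = 0) (hp₂ : ω₂.re = 0)
    (hω₁ : ω₁ * ω₁ = (d₁ : QuaternionAlgebra ℚ c₁ 0 c₂))
    (hω₂ : ω₂ * ω₂ = (d₂ : QuaternionAlgebra ℚ c₁ 0 c₂))
    (a₁ b₁ a₂ b₂ : ℤ) (ha₁ : 0 < a₁) (hb₁ : 0 < b₁) (ha₂ : 0 < a₂) (hb₂ : 0 < b₂)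
    (m₁ m₂ : ℕ) (l₁ r₁ l₂ r₂ : ℤ)
    (h₁ : ((a₁ : QuaternionAlgebra ℚ c₁ 0 c₂) + (b₁ : QuaternionAlgebra ℚ c₁ 0 c₂) * ω₁) ^ m₁
        = (l₁ : QuaternionAlgebra ℚ c₁ 0 c₂) + (r₁ : QuaternionAlgebra ℚ c₁ 0 c₂) * ω₁)
    (h₂ : ((a₂ : QuaternionAlgebra ℚ c₁ 0 c₂) + (b₂ : QuaternionAlgebra ℚ c₁ 0 c₂) * ω₂) ^ m₂
        = (l₂ : QuaternionAlgebra ℚ c₁ 0 c₂) + (r₂ : QuaternionAlgebra ℚ c₁ 0 c₂) * ω₂)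
    (heq : (l₁ : QuaternionAlgebra ℚ c₁ 0 c₂) + (r₁ : QuaternionAlgebra ℚ c₁ 0 c₂) * ω₁
        = (l₂ : QuaternionAlgebra ℚ c₁ 0 c₂) + (r₂ : QuaternionAlgebra ℚ c₁ 0 c₂) * ω₂) :
    m₁ = 0 ∧ m₂ = 0 := by
  obtain ⟨-, hpure⟩ := QuaternionAlgebra.intCast_add_intCast_mul_eq hp₁ hp₂ heq
  obtain ⟨rfl, rfl⟩ := Int.eq_zero_of_mul_self_mul_eq_of_squarefree hsf₁ hsf₂ hne
    (mul_self_mul_eq_of_intCast_mul_eq hω₁ hω₂ hpure)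
  constructor <;> by_contra hm
  · exact QuaternionAlgebra.intCast_add_intCast_mul_pow_ne_intCast hp₁ hω₁ hd₁ ha₁ hb₁ hm l₁
      (by simpa using h₁)
  · exact QuaternionAlgebra.intCast_add_intCast_mul_pow_ne_intCast hp₂ hω₂ hd₂ ha₂ hb₂ hm l₂
      (by simpa using h₂)
end

section
/- Consider the group Γ generated by α = [[√6/2 + √2/2, 0],[0, √6/2 - √2/2]] and β = [[√2, 1],[1, √2]]. Then det(α) = det(β) = 1, α is a hyperbolic homothety (α acts on ℋ as z ↦ λ²z with λ = √6/2 + √2/2), and the commutator αβα⁻¹β⁻¹ satisfies (αβα⁻¹β⁻¹)² = -Id. -/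
open Matrix

/-- for the generators `α = [[√6/2+√2/2, 0],[0, √6/2−√2/2]]` and
`β = [[√2,1],[1,√2]]` of the signature-(1;2) group `e2d1D6ii`:
`det α = det β = 1`, `α` acts on the upper half-plane as the homothety
`z ↦ λ²z` with `λ = √6/2+√2/2`, and `(αβα⁻¹β⁻¹)² = -Id`. -/
theorem e2d1D6ii_generators :
    let lam : ℝ := Real.sqrt 6 / 2 + Real.sqrt 2 / 2
    let mu : ℝ := Real.sqrt 6 / 2 - Real.sqrt 2 / 2
    let α : Matrix (Fin 2) (Fin 2) ℝ := !![lam, 0; 0, mu]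
    let β : Matrix (Fin 2) (Fin 2) ℝ := !![Real.sqrt 2, 1; 1, Real.sqrt 2]
    α.det = 1 ∧ β.det = 1 ∧
    (∀ z : ℂ, 0 < z.im → ((lam : ℂ) * z + 0) / (0 * z + (mu : ℂ)) = (lam : ℂ) ^ 2 * z) ∧
    (α * β * α⁻¹ * β⁻¹) ^ 2 = -1 := by
  intro lam mu α β
  have h6 : Real.sqrt 6 ^ 2 = 6 := Real.sq_sqrt (by norm_num)
  have h2 : Real.sqrt 2 ^ 2 = 2 := Real.sq_sqrt (by norm_num)
  have h62 : Real.sqrt 2 < Real.sqrt 6 := by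
    apply Real.sqrt_lt_sqrt <;> norm_num
  have h2p : 0 < Real.sqrt 2 := Real.sqrt_pos.mpr (by norm_num)
  have hlm : lam * mu = 1 := by simp only [lam, mu]; nlinarith
  have hmu : mu ≠ 0 := by simp only [mu]; nlinarith
  have hda : α.det = 1 := by simp [α, Matrix.det_fin_two_of, hlm]
  have hdb : β.det = 1 := by simp [β, Matrix.det_fin_two_of]; nlinarith
  have hainv : α⁻¹ = !![mu, 0; 0, lam] := by
    apply Matrix.inv_eq_right_inv
    ext i j
    fin_cases i <;> fin_cases j <;>
      simp [α, Matrix.mul_fin_two, hlm, mul_comm lam mu] <;> nlinarith [hlm]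
  have hbinv : β⁻¹ = !![Real.sqrt 2, -1; -1, Real.sqrt 2] := by
    apply Matrix.inv_eq_right_inv
    ext i j
    fin_cases i <;> fin_cases j <;>
      simp [β, Matrix.mul_fin_two] <;> nlinarith
  refine ⟨hda, hdb, ?_, ?_⟩
  · intro z hz
    have hmuC : (mu : ℂ) ≠ 0 := by exact_mod_cast hmu
    have hr : (lam : ℂ) ^ 2 * (mu : ℂ) = (lam : ℂ) := by
      have h : lam ^ 2 * mu = lam := by
        linear_combination lam * hlm
      exact_mod_cast h
    rw [zero_mul, zero_add, add_zero, div_eq_iff hmuC]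
    linear_combination -z * hr
  · rw [hainv, hbinv]
    simp only [α, β, Matrix.mul_fin_two, pow_two]
    ext i j
    set s := Real.sqrt 6 with hs
    set t := Real.sqrt 2 with ht
    simp only [lam, mu] at *
    fin_cases i <;> fin_cases j <;> simp [Matrix.mul_fin_two]
    · linear_combination (3/8 - 3/8*t^2 + 1/8*t^4 - 1/8*t^6 + 1/4*s*t - 1/4*s*t^3
        + 1/16*s^2 - 1/8*s^2*t^2 + 1/16*s^2*t^4) * h6
        + (-13/8 + 5/16*t^2 - 1/4*t^4 + 1/16*t^6 - 3/4*s*t + 1/4*s*t^3) * h2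
    · linear_combination (-1/4*t^3 + 1/4*t^5 - 1/4*s*t^2 + 1/4*s*t^4) * h6
        + (3/4*t^3 - 1/4*t^5 + 3/4*s*t^2 - 1/4*s*t^4) * h2
    · linear_combination (-1/4*t^3 + 1/4*t^5 + 1/4*s*t^2 - 1/4*s*t^4) * h6
        + (3/4*t^3 - 1/4*t^5 - 3/4*s*t^2 + 1/4*s*t^4) * h2
    · linear_combination (3/8 - 3/8*t^2 + 1/8*t^4 - 1/8*t^6 - 1/4*s*t + 1/4*s*t^3
        + 1/16*s^2 - 1/8*s^2*t^2 + 1/16*s^2*t^4) * h6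
        + (-13/8 + 5/16*t^2 - 1/4*t^4 + 1/16*t^6 + 3/4*s*t - 1/4*s*t^3) * h2
end
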